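/- (Poisson summation for codes) Let m ≥ 2, n ≥ 1, let χ(a) = exp(2πi·a.val/m), let C ⊆ (ℤ/mℤ)^n be a submodule, and let f : (ℤ/mℤ)^n → ℂ be any function. Define the Fourier transform f̂(u) = ∑_{v ∈ (ℤ/mℤ)^n} χ(u·v) f(v). Then ∑_{v ∈ C^⊥} f(v) = (1/|C|) ∑_{u ∈ C} f̂(u). -/
import Mathlib

noncomputable def chi (m : ℕ) (a : ZMod m) : ℂ :=
  Complex.exp (2 * Real.pi * Complex.I * a.val / m)

section aux

variable (m : ℕ) [NeZero m]

noncomputable def zetam : ℂ := Complex.exp (2 * Real.pi * Complex.I / m)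

lemma zetam_prim : IsPrimitiveRoot (zetam m) m := by
  exact Complex.isPrimitiveRoot_exp m (NeZero.ne m)

lemma zetam_pow : (zetam m) ^ m = 1 := (zetam_prim m).pow_eq_one

lemma chi_eq (a : ZMod m) : chi m a = (zetam m) ^ a.val := by
  unfold chi zetam
  rw [← Complex.exp_nat_mul]
  ring_nf

noncomputable def psim : AddChar (ZMod m) ℂ := AddChar.zmodChar m (zetam_pow m)

lemma chi_eq_psim (a : ZMod m) : chi m a = psim m a := by
  rw [chi_eq, psim, AddChar.zmodChar_apply]

lemma psim_eq_one_iff (a : ZMod m) : psim m a = 1 ↔ a = 0 := by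
  constructor
  · intro h
    rw [psim, AddChar.zmodChar_apply, (zetam_prim m).pow_eq_one_iff_dvd] at h
    have hlt := ZMod.val_lt a
    have : a.val = 0 := Nat.eq_zero_of_dvd_of_lt h hlt
    exact (ZMod.val_eq_zero a).mp this
  · intro h; simp [h, psim, AddChar.zmodChar_apply, ZMod.val_zero]

end aux

open scoped Classical in
theorem poisson_summation_codes (m n : ℕ) [NeZero m] (hm : 2 ≤ m) (hn : 1 ≤ n)
    (C : Submodule (ZMod m) (Fin n → ZMod m)) (f : (Fin n → ZMod m) → ℂ) :
    ∑ v ∈ Finset.univ.filter (fun v : Fin n → ZMod m => ∀ c : C, ∑ i, (c : Fin n → ZMod m) i * v i = 0), f v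
      = (1 / (Fintype.card C : ℂ)) *
        ∑ u : C, ∑ v : Fin n → ZMod m, chi m (∑ i, (u : Fin n → ZMod m) i * v i) * f v := by
  -- the dot-product hom for fixed v
  have key : ∀ v : Fin n → ZMod m,
      (∑ u : C, chi m (∑ i, (u : Fin n → ZMod m) i * v i))
        = if (∀ c : C, ∑ i, (c : Fin n → ZMod m) i * v i = 0)
          then (Fintype.card C : ℂ) else 0 := by
    intro v
    set g : C →+ ZMod m :=
      { toFun := fun u => ∑ i, (u : Fin n → ZMod m) i * v i
        map_zero' := by simp
        map_add' := fun a b => by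
          simp [add_mul, Finset.sum_add_distrib] } with hg
    set φ : AddChar C ℂ := (psim m).compAddMonoidHom g with hφ
    have h1 : ∀ u : C, chi m (∑ i, (u : Fin n → ZMod m) i * v i) = φ u := by
      intro u
      rw [chi_eq_psim]
      rfl
    rw [Finset.sum_congr rfl (fun u _ => h1 u), AddChar.sum_eq_ite]
    have h2 : φ = 0 ↔ (∀ c : C, ∑ i, (c : Fin n → ZMod m) i * v i = 0) := by
      rw [← AddChar.one_eq_zero, AddChar.eq_one_iff]
      constructor
      · intro h c
        have := h c
        rw [hφ, AddChar.compAddMonoidHom_apply, psim_eq_one_iff] at this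
        exact this
      · intro h u
        rw [hφ, AddChar.compAddMonoidHom_apply]
        have := h u
        simp only [hg, AddMonoidHom.coe_mk, ZeroHom.coe_mk]
        rw [this, (psim_eq_one_iff m 0).mpr rfl]
    split_ifs with hc hd hd
    · rfl
    · exact absurd (h2.mp hc) hd
    · exact absurd (h2.mpr hd) hc
    · rfl
  rw [Finset.sum_comm]
  have : ∀ v : Fin n → ZMod m,
      (∑ u : C, chi m (∑ i, (u : Fin n → ZMod m) i * v i) * f v)
        = (if (∀ c : C, ∑ i, (c : Fin n → ZMod m) i * v i = 0)
          then (Fintype.card C : ℂ) else 0) * f v := by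
    intro v
    rw [← Finset.sum_mul, key v]
  rw [Finset.sum_congr rfl (fun v _ => this v)]
  rw [Finset.mul_sum]
  rw [← Finset.sum_filter_add_sum_filter_not Finset.univ
    (fun v : Fin n → ZMod m => ∀ c : C, ∑ i, (c : Fin n → ZMod m) i * v i = 0)]
  have hcard : (Fintype.card C : ℂ) ≠ 0 := by
    exact_mod_cast Fintype.card_ne_zero
  have e1 : ∀ v ∈ Finset.univ.filter (fun v : Fin n → ZMod m => ∀ c : C, ∑ i, (c : Fin n → ZMod m) i * v i = 0),
      (1 / (Fintype.card C : ℂ)) * ((if (∀ c : C, ∑ i, (c : Fin n → ZMod m) i * v i = 0)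
          then (Fintype.card C : ℂ) else 0) * f v) = f v := by
    intro v hv
    rw [Finset.mem_filter] at hv
    rw [if_pos hv.2]
    field_simp
  have e2 : ∀ v ∈ Finset.univ.filter (fun v : Fin n → ZMod m => ¬ ∀ c : C, ∑ i, (c : Fin n → ZMod m) i * v i = 0),
      (1 / (Fintype.card C : ℂ)) * ((if (∀ c : C, ∑ i, (c : Fin n → ZMod m) i * v i = 0)
          then (Fintype.card C : ℂ) else 0) * f v) = 0 := by
    intro v hv
    rw [Finset.mem_filter] at hv
    rw [if_neg hv.2]
    ring
  rw [Finset.sum_congr rfl e1, Finset.sum_congr rfl e2, Finset.sum_const_zero, add_zero]
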